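/- arXiv:2204.04436 — 4 statements merged into one kernel-verified Lean document; each statement's English description precedes it below -/
import Mathlib

section
/- The smallest positive solution t₂ of cosh(t)·cos(t) = 1 satisfies t₂ > 3π/2. Moreover, for each integer k ≥ 2, the k-th positive solution t_k satisfies |t_k - (2k-1)π/2| ≤ π·exp(-(k-1)π). -/
open Real Set

/-
Write `f = cosh · cos`, `aₖ = (2k - 1)π/2` and `εₖ = π e^{-(k-1)π}`. Since `cos (aₖ + x) = (-1)ᵏ sin x`,
`(-1)ᵏ f (aₖ + x) = cosh (aₖ + x) sin x`. For `εₖ ≤ |x| ≤ π/2`, Jordan's inequality `sin u ≥ 2u/π`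
and `cosh y > eʸ/2` make this exceed `1` in absolute value, because `e^{aₖ - π/2} εₖ / π = 1`.
As `f` decreases from `f 0 = 1` on `[0, π]`, every positive root therefore lies in a window
`|s - aₖ| ≤ εₖ` with `k ≥ 2`. By the intermediate value theorem each window contains a root, and only
one, since `cosh (aₖ + x) sin x` is increasing for `|x| < 1/2`. The windows are disjoint and
increasing in `k`, so the increasing enumeration of the positive roots picks them window by window.
-/

noncomputable def rootCenter (k : ℕ) : ℝ := (2 * (k : ℝ) - 1) * π / 2

noncomputable def rootRadius (k : ℕ) : ℝ := π * exp (-((k : ℝ) - 1) * π)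

lemma rootRadius_pos (k : ℕ) : 0 < rootRadius k := by
  unfold rootRadius; positivity

lemma rootRadius_lt_half {k : ℕ} (hk : 2 ≤ k) : rootRadius k < 1 / 2 := by
  have hk' : (2 : ℝ) ≤ k := by exact_mod_cast hk
  have hexp : 2 * π < exp π := by
    nlinarith [quadratic_le_exp_of_nonneg pi_pos.le]
  have hmul : exp (-π) * exp π = 1 := by rw [← exp_add]; simp
  have hle : exp (-((k : ℝ) - 1) * π) ≤ exp (-π) := exp_le_exp.2 (by nlinarith [pi_pos])
  unfold rootRadius
  nlinarith [exp_pos (-π), pi_pos]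

lemma rootCenter_add_rootRadius_lt {k l : ℕ} (hk : 2 ≤ k) (hkl : k < l) :
    rootCenter k + rootRadius k < rootCenter l - rootRadius l := by
  have hkl' : (k : ℝ) + 1 ≤ l := by exact_mod_cast hkl
  have := rootRadius_lt_half hk
  have := rootRadius_lt_half (hk.trans hkl.le)
  unfold rootCenter
  nlinarith [pi_gt_three]

lemma rootRadius_lt_rootCenter {k : ℕ} (hk : 2 ≤ k) : rootRadius k < rootCenter k := by
  have hk' : (2 : ℝ) ≤ k := by exact_mod_cast hk
  have := rootRadius_lt_half hk
  unfold rootCenter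
  nlinarith [pi_gt_three]

lemma one_lt_cosh_rootCenter_sub_mul_sin {k : ℕ} {u : ℝ} (h₁ : rootRadius k ≤ u)
    (h₂ : u ≤ π / 2) : 1 < cosh (rootCenter k - u) * sin u := by
  have hu : 0 < u := (rootRadius_pos k).trans_le h₁
  calc 1 = exp (rootCenter k - π / 2) * (rootRadius k / π) := by
        rw [rootRadius, mul_div_cancel_left₀ _ pi_ne_zero, ← exp_add]
        unfold rootCenter; ring_nf; simp
    _ ≤ exp (rootCenter k - u) * (u / π) := by
        gcongr
        exact div_nonneg (rootRadius_pos k).le pi_pos.le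
    _ = exp (rootCenter k - u) / 2 * (2 / π * u) := by ring
    _ < cosh (rootCenter k - u) * sin u := by
        refine mul_lt_mul ?_ (mul_le_sin hu.le h₂) (by positivity) (cosh_pos _).le
        rw [cosh_eq]; linarith [exp_pos (-(rootCenter k - u))]

lemma cosh_mul_cos_rootCenter_add (k : ℕ) (x : ℝ) :
    cosh (rootCenter k + x) * cos (rootCenter k + x) =
      (-1) ^ k * (cosh (rootCenter k + x) * sin x) := by
  rw [show rootCenter k + x = k * π - (π / 2 - x) by unfold rootCenter; ring,
    cos_nat_mul_pi_sub, cos_pi_div_two_sub]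
  ring

lemma one_lt_abs_cosh_rootCenter_add_mul_sin {k : ℕ} (hk : 1 ≤ k) {x : ℝ}
    (h₁ : rootRadius k ≤ |x|) (h₂ : |x| ≤ π / 2) :
    1 < |cosh (rootCenter k + x) * sin x| := by
  have hc : π / 2 ≤ rootCenter k := by
    have hk' : (1 : ℝ) ≤ k := by exact_mod_cast hk
    unfold rootCenter; nlinarith [pi_pos]
  have hcosh : cosh (rootCenter k - |x|) ≤ cosh (rootCenter k + x) := by
    have h₃ : 0 ≤ rootCenter k - |x| := by linarith
    have h₄ : rootCenter k - |x| ≤ rootCenter k + x := by linarith [neg_abs_le x]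
    rw [cosh_le_cosh, abs_of_nonneg h₃, abs_of_nonneg (h₃.trans h₄)]
    exact h₄
  have hsin : sin |x| = |sin x| := by
    rcases abs_cases x with ⟨hx, hx0⟩ | ⟨hx, hx0⟩ <;> rw [hx]
    · exact (abs_of_nonneg (sin_nonneg_of_nonneg_of_le_pi hx0 (by linarith))).symm
    · rw [sin_neg, abs_of_nonpos (sin_nonpos_of_nonpos_of_neg_pi_le hx0.le (by linarith))]
  calc 1 < cosh (rootCenter k - |x|) * sin |x| := one_lt_cosh_rootCenter_sub_mul_sin h₁ h₂
    _ ≤ cosh (rootCenter k + x) * |sin x| := by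
        rw [hsin]; exact mul_le_mul_of_nonneg_right hcosh (abs_nonneg _)
    _ = |cosh (rootCenter k + x) * sin x| := by rw [abs_mul, abs_of_pos (cosh_pos _)]

lemma strictMonoOn_cosh_rootCenter_add_mul_sin {k : ℕ} (hk : 2 ≤ k) :
    StrictMonoOn (fun x ↦ cosh (rootCenter k + x) * sin x)
      (Icc (-rootRadius k) (rootRadius k)) := by
  refine strictMonoOn_of_deriv_pos (convex_Icc _ _) (by fun_prop) fun x hx ↦ ?_
  rw [interior_Icc] at hx
  have hd : HasDerivAt (fun x ↦ cosh (rootCenter k + x) * sin x)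
      (sinh (rootCenter k + x) * 1 * sin x + cosh (rootCenter k + x) * cos x) x :=
    ((hasDerivAt_id x).const_add (rootCenter k)).cosh.mul (hasDerivAt_sin x)
  rw [hd.deriv, mul_one]
  set y := rootCenter k + x
  have hx' : |x| < 1 / 2 := (abs_lt.2 ⟨hx.1, hx.2⟩).trans (rootRadius_lt_half hk)
  have hsinh : |sinh y| ≤ cosh y := abs_le.2
    ⟨by linarith [cosh_add_sinh y, exp_pos y], by linarith [cosh_sub_sinh y, exp_pos (-y)]⟩
  have hsin : |sin x| < 1 / 2 := abs_sin_le_abs.trans_lt hx'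
  have hcos : 7 / 8 ≤ cos x := by
    nlinarith [one_sub_sq_div_two_le_cos (x := x), sq_abs x, abs_nonneg x]
  have hprod : |sinh y * sin x| ≤ cosh y * (1 / 2) := by
    rw [abs_mul]; exact mul_le_mul hsinh hsin.le (abs_nonneg _) (cosh_pos y).le
  nlinarith [neg_abs_le (sinh y * sin x), cosh_pos y]

lemma cosh_mul_cos_lt_one {s : ℝ} (h₀ : 0 < s) (hs : s ≤ π) : cosh s * cos s < 1 := by
  have hG : ∀ y ∈ Ioo 0 π, 0 < cosh y * sin y - sinh y * cos y := by
    have hmono : StrictMonoOn (fun y ↦ cosh y * sin y - sinh y * cos y) (Icc 0 π) := by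
      refine strictMonoOn_of_deriv_pos (convex_Icc 0 π) (by fun_prop) fun y hy ↦ ?_
      rw [interior_Icc] at hy
      have hd : HasDerivAt (fun y ↦ cosh y * sin y - sinh y * cos y)
          (sinh y * sin y + cosh y * cos y - (cosh y * cos y + sinh y * -sin y)) y :=
        ((hasDerivAt_cosh y).mul (hasDerivAt_sin y)).sub
          ((hasDerivAt_sinh y).mul (hasDerivAt_cos y))
      rw [hd.deriv]
      nlinarith [sin_pos_of_pos_of_lt_pi hy.1 hy.2, sinh_pos_iff.2 hy.1]
    intro y hy
    simpa using hmono (left_mem_Icc.2 pi_pos.le) (Ioo_subset_Icc_self hy) hy.1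
  have hanti : StrictAntiOn (fun y ↦ cosh y * cos y) (Icc 0 π) := by
    refine strictAntiOn_of_deriv_neg (convex_Icc 0 π) (by fun_prop) fun y hy ↦ ?_
    rw [interior_Icc] at hy
    have hd : HasDerivAt (fun y ↦ cosh y * cos y) (sinh y * cos y + cosh y * -sin y) y :=
      (hasDerivAt_cosh y).mul (hasDerivAt_cos y)
    rw [hd.deriv]
    linarith [hG y hy]
  simpa using hanti (left_mem_Icc.2 pi_pos.le) ⟨h₀.le, hs⟩ h₀

lemma three_pi_div_two_lt_of_cosh_mul_cos_eq_one {s : ℝ} (h₀ : 0 < s)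
    (hs : cosh s * cos s = 1) : 3 * π / 2 < s := by
  by_contra! h
  rcases le_or_gt s π with h₁ | h₁
  · exact (cosh_mul_cos_lt_one h₀ h₁).ne hs
  · have hc : cos s ≤ 0 := cos_nonpos_of_pi_div_two_le_of_le (by linarith [pi_pos]) (by linarith)
    nlinarith [mul_nonpos_of_nonneg_of_nonpos (cosh_pos s).le hc]

lemma exists_cosh_mul_cos_eq_one {k : ℕ} (hk : 2 ≤ k) :
    ∃ s, |s - rootCenter k| ≤ rootRadius k ∧ cosh s * cos s = 1 := by
  set ε := rootRadius k
  set g := fun x ↦ cosh (rootCenter k + x) * sin x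
  have hε : 0 < ε := rootRadius_pos k
  have hεπ : ε < π / 2 := by linarith [rootRadius_lt_half hk, pi_gt_three]
  have hsin : 0 < sin ε := sin_pos_of_pos_of_lt_pi hε (by linarith)
  have hbound (x : ℝ) (hx : |x| = ε) : 1 < |g x| :=
    one_lt_abs_cosh_rootCenter_add_mul_sin (by omega) hx.ge (by linarith)
  have hright : 1 < g ε := by
    simpa [g, abs_of_pos (mul_pos (cosh_pos _) hsin)] using hbound ε (abs_of_pos hε)
  have hleft : g (-ε) < -1 := by
    have hneg : g (-ε) < 0 := by
      simpa [g, sin_neg] using mul_pos (cosh_pos (rootCenter k + -ε)) hsin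
    linarith [abs_of_neg hneg ▸ hbound (-ε) (by rw [abs_neg, abs_of_pos hε])]
  have hsign : (-1 : ℝ) ^ k ∈ Icc (g (-ε)) (g ε) := by
    rcases neg_one_pow_eq_or ℝ k with h | h <;> rw [h] <;> constructor <;> linarith
  obtain ⟨x, hx, hgx⟩ := intermediate_value_Icc (by linarith) (by fun_prop) hsign
  refine ⟨rootCenter k + x, by simpa using abs_le.2 hx, ?_⟩
  rw [cosh_mul_cos_rootCenter_add, show cosh (rootCenter k + x) * sin x = g x from rfl, hgx,
    ← mul_pow]
  norm_num

lemma eq_of_cosh_mul_cos_eq_one {k : ℕ} (hk : 2 ≤ k) {s s' : ℝ}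
    (hs : |s - rootCenter k| ≤ rootRadius k) (hs' : |s' - rootCenter k| ≤ rootRadius k)
    (hfs : cosh s * cos s = 1) (hfs' : cosh s' * cos s' = 1) : s = s' := by
  obtain ⟨x, rfl⟩ : ∃ x, s = rootCenter k + x := ⟨s - rootCenter k, by ring⟩
  obtain ⟨x', rfl⟩ : ∃ x, s' = rootCenter k + x := ⟨s' - rootCenter k, by ring⟩
  rw [add_sub_cancel_left] at hs hs'
  rw [cosh_mul_cos_rootCenter_add] at hfs hfs'
  congr 1
  refine (strictMonoOn_cosh_rootCenter_add_mul_sin hk).injOn (abs_le.1 hs) (abs_le.1 hs') ?_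
  exact mul_left_cancel₀ (by simp) (hfs.trans hfs'.symm)

lemma exists_abs_sub_rootCenter_le_of_cosh_mul_cos_eq_one {s : ℝ} (h₀ : 0 < s)
    (hs : cosh s * cos s = 1) : ∃ k, 2 ≤ k ∧ |s - rootCenter k| ≤ rootRadius k := by
  set k := ⌈s / π⌉₊
  have hsk : s ≤ k * π := (div_le_iff₀ pi_pos).1 (Nat.le_ceil _)
  have hks : (k - 1) * π < s := by
    have := Nat.ceil_lt_add_one (div_pos h₀ pi_pos).le
    exact (lt_div_iff₀ pi_pos).1 (by linarith)
  have hk : 2 ≤ k := by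
    by_contra! h
    have hk1 : (k : ℝ) ≤ 1 := by exact_mod_cast Nat.le_of_lt_succ h
    exact (cosh_mul_cos_lt_one h₀ (by nlinarith [pi_pos])).ne hs
  refine ⟨k, hk, ?_⟩
  by_contra! h
  have hx : |s - rootCenter k| ≤ π / 2 := by
    unfold rootCenter
    exact abs_le.2 ⟨by linarith, by linarith⟩
  have hg := one_lt_abs_cosh_rootCenter_add_mul_sin (by omega) h.le hx
  have hf := cosh_mul_cos_rootCenter_add k (s - rootCenter k)
  rw [add_sub_cancel, hs] at hf
  rw [add_sub_cancel] at hg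
  have := congrArg abs hf
  rw [abs_mul, abs_pow, abs_neg, abs_one, one_pow, one_mul] at this
  linarith

noncomputable def coshCosRoot (i : ℕ) : ℝ :=
  (exists_cosh_mul_cos_eq_one (le_add_self : 2 ≤ i + 2)).choose

lemma abs_coshCosRoot_sub_le (i : ℕ) :
    |coshCosRoot i - rootCenter (i + 2)| ≤ rootRadius (i + 2) :=
  (exists_cosh_mul_cos_eq_one le_add_self).choose_spec.1

lemma cosh_mul_cos_coshCosRoot (i : ℕ) : cosh (coshCosRoot i) * cos (coshCosRoot i) = 1 :=
  (exists_cosh_mul_cos_eq_one le_add_self).choose_spec.2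

lemma strictMono_coshCosRoot : StrictMono coshCosRoot :=
  strictMono_nat_of_lt_succ fun i ↦ by
    have h := rootCenter_add_rootRadius_lt (le_add_self : 2 ≤ i + 2) (Nat.lt_succ_self _)
    linarith [abs_le.1 (abs_coshCosRoot_sub_le i), abs_le.1 (abs_coshCosRoot_sub_le (i + 1))]

lemma range_coshCosRoot : range coshCosRoot = {s | 0 < s ∧ cosh s * cos s = 1} := by
  ext s
  constructor
  · rintro ⟨i, rfl⟩
    have := rootRadius_lt_rootCenter (le_add_self : 2 ≤ i + 2)
    exact ⟨by linarith [abs_le.1 (abs_coshCosRoot_sub_le i)], cosh_mul_cos_coshCosRoot i⟩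
  · rintro ⟨h₀, hs⟩
    obtain ⟨k, hk, hsk⟩ := exists_abs_sub_rootCenter_le_of_cosh_mul_cos_eq_one h₀ hs
    obtain ⟨i, rfl⟩ := Nat.exists_eq_add_of_le' hk
    exact ⟨i, eq_of_cosh_mul_cos_eq_one hk (abs_coshCosRoot_sub_le i) hsk
      (cosh_mul_cos_coshCosRoot i) hs⟩

theorem cosh_cos_roots_localization (t : ℕ → ℝ)
    (hpos : ∀ k, 2 ≤ k → 0 < t k)
    (hmono : ∀ k l, 2 ≤ k → k < l → t k < t l)
    (hsol : ∀ k, 2 ≤ k → Real.cosh (t k) * Real.cos (t k) = 1)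
    (hall : ∀ s : ℝ, 0 < s → Real.cosh s * Real.cos s = 1 → ∃ k, 2 ≤ k ∧ t k = s) :
    3 * Real.pi / 2 < t 2 ∧
      ∀ k : ℕ, 2 ≤ k →
        |t k - (2 * (k : ℝ) - 1) * Real.pi / 2| ≤ Real.pi * Real.exp (-((k : ℝ) - 1) * Real.pi) := by
  refine ⟨three_pi_div_two_lt_of_cosh_mul_cos_eq_one (hpos 2 le_rfl) (hsol 2 le_rfl), ?_⟩
  have hstrict : StrictMono fun i ↦ t (i + 2) :=
    strictMono_nat_of_lt_succ fun i ↦ hmono _ _ le_add_self (by omega)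
  have hrange : range (fun i ↦ t (i + 2)) = range coshCosRoot := by
    rw [range_coshCosRoot]
    ext s
    constructor
    · rintro ⟨i, rfl⟩
      exact ⟨hpos _ le_add_self, hsol _ le_add_self⟩
    · rintro ⟨h₀, hs⟩
      obtain ⟨k, hk, rfl⟩ := hall s h₀ hs
      obtain ⟨i, rfl⟩ := Nat.exists_eq_add_of_le' hk
      exact ⟨i, rfl⟩
  have heq := (hstrict.range_inj strictMono_coshCosRoot).1 hrange
  intro k hk
  obtain ⟨i, rfl⟩ := Nat.exists_eq_add_of_le' hk
  rw [congrFun heq i]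
  exact abs_coshCosRoot_sub_le i
end

section
/- For t ≥ max{2·log(4/ε), 3π/2} and x ∈ [0, 1/2], it holds that |(1 - (cosh(t) - cos(t))/(sinh(t) - sin(t))) · sinh(tx)| ≤ ε. -/
set_option maxHeartbeats 1000000 in
theorem sinh_correction_small (ε t x : ℝ) (hε : 0 < ε)
    (ht : max (2 * Real.log (4 / ε)) (3 * Real.pi / 2) ≤ t)
    (hx : x ∈ Set.Icc (0:ℝ) (1/2)) :
    |(1 - (Real.cosh t - Real.cos t) / (Real.sinh t - Real.sin t)) * Real.sinh (t * x)| ≤ ε := by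
  obtain ⟨hx0, hx2⟩ := hx
  have ht1 : 2 * Real.log (4 / ε) ≤ t := le_trans (le_max_left _ _) ht
  have ht2 : 3 * Real.pi / 2 ≤ t := le_trans (le_max_right _ _) ht
  have hpi := Real.pi_gt_three
  have ht4 : (4:ℝ) ≤ t := by linarith
  set E := Real.exp (t/2) with hEdef
  set F := Real.exp (-(t/2)) with hFdef
  have hE0 : (0:ℝ) < E := Real.exp_pos _
  have hF0 : (0:ℝ) < F := Real.exp_pos _
  have hEF : E * F = 1 := by
    rw [hEdef, hFdef, ← Real.exp_add]; simp
  have hE3 : (3:ℝ) ≤ E := by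
    have := Real.add_one_le_exp (t/2); linarith
  have hF1 : F ≤ 1 := by
    calc F ≤ Real.exp 0 := Real.exp_le_exp.mpr (by linarith)
    _ = 1 := Real.exp_zero
  have hεE : 4 ≤ ε * E := by
    have h := Real.exp_le_exp.mpr (show Real.log (4/ε) ≤ t/2 by linarith)
    rw [Real.exp_log (by positivity)] at h
    calc (4:ℝ) = ε * (4/ε) := by field_simp
    _ ≤ ε * E := mul_le_mul_of_nonneg_left h hε.le
  have hexpT : Real.exp t = E * E := by
    rw [hEdef, ← Real.exp_add]; congr 1; ring
  have hexpNT : Real.exp (-t) = F * F := by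
    rw [hFdef, ← Real.exp_add]; congr 1; ring
  have hsinh_t : Real.sinh t = (E * E - F * F) / 2 := by
    rw [Real.sinh_eq, hexpT, hexpNT]
  have hsin1 := Real.sin_le_one t
  have hsin2 := Real.neg_one_le_sin t
  have hden : 0 < Real.sinh t - Real.sin t := by
    rw [hsinh_t]; nlinarith
  have hsinhx0 : 0 ≤ Real.sinh (t * x) :=
    Real.sinh_nonneg_iff.mpr (mul_nonneg (by linarith) hx0)
  have hsinhxle : Real.sinh (t * x) ≤ (E - F) / 2 := by
    have h1 : Real.sinh (t * x) ≤ Real.sinh (t/2) := by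
      apply Real.sinh_le_sinh.mpr
      nlinarith
    have h2 : Real.sinh (t/2) = (E - F) / 2 := by
      rw [Real.sinh_eq, hEdef, hFdef]
    linarith
  have hcs : Real.cosh t - Real.sinh t = Real.exp (-t) := Real.cosh_sub_sinh t
  have key : 1 - (Real.cosh t - Real.cos t) / (Real.sinh t - Real.sin t)
      = (Real.cos t - Real.sin t - Real.exp (-t)) / (Real.sinh t - Real.sin t) := by
    field_simp
    linarith
  rw [key, div_mul_eq_mul_div, abs_div, abs_of_pos hden, div_le_iff₀ hden,
    abs_mul, abs_of_nonneg hsinhx0]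
  -- bound |cos t - sin t - exp (-t)|
  set s := Real.sqrt 2 with hsdef
  have hs0 : 0 ≤ s := Real.sqrt_nonneg 2
  have hs2 : s ^ 2 = 2 := Real.sq_sqrt (by norm_num)
  have hs32 : s ≤ 3/2 := by nlinarith
  have hcos_sin : |Real.cos t - Real.sin t| ≤ s := by
    rw [← Real.sqrt_sq_eq_abs, hsdef]
    apply Real.sqrt_le_sqrt
    nlinarith [Real.sin_sq_add_cos_sq t, Real.neg_one_le_sin (2*t), Real.sin_two_mul t]
  have hnum : |Real.cos t - Real.sin t - Real.exp (-t)| ≤ s + F * F := by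
    calc |Real.cos t - Real.sin t - Real.exp (-t)|
        ≤ |Real.cos t - Real.sin t| + |Real.exp (-t)| := abs_sub _ _
    _ ≤ s + F * F := by
        rw [abs_of_pos (Real.exp_pos _), hexpNT]; linarith
  have hnum0 : 0 ≤ |Real.cos t - Real.sin t - Real.exp (-t)| := abs_nonneg _
  have hstep : |Real.cos t - Real.sin t - Real.exp (-t)| * Real.sinh (t * x)
      ≤ (s + F * F) * ((E - F) / 2) :=
    mul_le_mul hnum hsinhxle hsinhx0 (by positivity)
  have hfin : (s + F * F) * ((E - F) / 2) ≤ ε * (Real.sinh t - Real.sin t) := by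
    rw [hsinh_t]
    nlinarith [mul_nonneg (sub_nonneg.mpr hεE) (show (0:ℝ) ≤ E*E - F*F - 2 by nlinarith),
      mul_pos hε hE0, mul_pos hF0 hF0, sq_nonneg (E - F), sq_nonneg F]
  linarith
end

section
/- Let t > 0 satisfy cosh(t)cos(t) = 1 and let η_t(x) = cosh(tx) + cos(tx) - B·(sinh(tx) + sin(tx)) with B = (cosh(t)-cos(t))/(sinh(t)-sin(t)). Then ∫_0^1 η_t(x)² dx = 1. -/
/-!
Substituting `u = t x` turns the integral into `t⁻¹ ∫₀ᵗ η(u)² du` with `η = cosh + cos - B (sinh + sin)`.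
The square `η²` has an elementary primitive (products of hyperbolic and circular functions, reduced
with `cos² + sin² = 1` and `cosh² - sinh² = 1`), and evaluating it at `u = t` gives exactly `t`
once `cosh t cos t = 1` and `B (sinh t - sin t) = cosh t - cos t` are used.
-/

open Real

noncomputable def beamProfile (B u : ℝ) : ℝ :=
  cosh u + cos u - B * (sinh u + sin u)

noncomputable def beamProfileSqPrimitive (B u : ℝ) : ℝ :=
  (u + sinh u * cosh u) / 2 + (u + sin u * cos u) / 2 + cosh u * sin u + sinh u * cos u
    - B * (cosh u ^ 2 + sin u ^ 2 + 2 * (sinh u * sin u))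
    + B ^ 2 * ((sinh u * cosh u - sin u * cos u) / 2 + cosh u * sin u - sinh u * cos u)

theorem continuous_beamProfile (B : ℝ) : Continuous (beamProfile B) := by
  unfold beamProfile
  fun_prop

theorem hasDerivAt_beamProfileSqPrimitive (B u : ℝ) :
    HasDerivAt (beamProfileSqPrimitive B) (beamProfile B u ^ 2) u := by
  have hid := hasDerivAt_id u
  have hch := hasDerivAt_cosh u
  have hsh := hasDerivAt_sinh u
  have hco := hasDerivAt_cos u
  have hsi := hasDerivAt_sin u
  have hG := (((((hid.add (hsh.mul hch)).div_const 2).add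
        ((hid.add (hsi.mul hco)).div_const 2)).add
        (hch.mul hsi) |>.add (hsh.mul hco)).sub
        ((((hch.pow 2).add (hsi.pow 2)).add
          ((hsh.mul hsi).const_mul 2)).const_mul B)).add
        (((((hsh.mul hch).sub (hsi.mul hco)).div_const 2).add
          (hch.mul hsi) |>.sub (hsh.mul hco)).const_mul (B ^ 2))
  refine hG.congr_deriv ?_
  unfold beamProfile
  linear_combination (B ^ 2 / 2 - 1 / 2) * cosh_sq_sub_sinh_sq u
    - (1 / 2 + B ^ 2 / 2) * sin_sq_add_cos_sq u

theorem integral_beamProfile_sq (B t : ℝ) :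
    ∫ u in (0:ℝ)..t, beamProfile B u ^ 2 = beamProfileSqPrimitive B t + B := by
  rw [intervalIntegral.integral_eq_sub_of_hasDerivAt
    (fun u _ => hasDerivAt_beamProfileSqPrimitive B u)
    (((continuous_beamProfile B).pow 2).intervalIntegrable 0 t)]
  simp [beamProfileSqPrimitive]

theorem sin_lt_sinh {t : ℝ} (ht : 0 < t) : sin t < sinh t :=
  (sin_lt ht).trans (self_lt_sinh_iff.mpr ht)

theorem beamProfileSqPrimitive_add_eq_self {B t : ℝ} (hcc : cosh t * cos t = 1)
    (hB : B * (sinh t - sin t) = cosh t - cos t) (hne : sinh t - sin t ≠ 0) :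
    beamProfileSqPrimitive B t + B = t := by
  set C := cosh t
  set S := sinh t
  set c := cos t
  set s := sin t
  have h2 : s ^ 2 + c ^ 2 = 1 := sin_sq_add_cos_sq t
  have h3 : C ^ 2 - S ^ 2 = 1 := cosh_sq_sub_sinh_sq t
  -- `B` enters quadratically, so `hB` is only usable after scaling by `(sinh t - sin t)²`.
  have hmain : 2 * (S - s) ^ 2 * (beamProfileSqPrimitive B t + B) = 2 * (S - s) ^ 2 * t := by
    unfold beamProfileSqPrimitive
    linear_combination (6 * S * c - 6 * C * s) * hcc
      + (-(c * s) - 2 * S * c + 4 * C * s - C * S) * (h2 + h3)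
      + (2 * (S - s) * (1 - C ^ 2 - s ^ 2 - 2 * S * s)
          + (S * C - s * c + 2 * C * s - 2 * S * c) * (B * (S - s) + C - c)) * hB
  exact mul_left_cancel₀ (by positivity) hmain

theorem h2_eigenfunction_normalized (t : ℝ) (ht : 0 < t)
    (hcc : Real.cosh t * Real.cos t = 1)
    (B : ℝ) (hB : B = (Real.cosh t - Real.cos t) / (Real.sinh t - Real.sin t)) :
    ∫ x in (0:ℝ)..1,
      (Real.cosh (t * x) + Real.cos (t * x) - B * (Real.sinh (t * x) + Real.sin (t * x))) ^ 2
      = 1 := by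
  have hne : sinh t - sin t ≠ 0 := (sub_pos.mpr (sin_lt_sinh ht)).ne'
  have hB' : B * (sinh t - sin t) = cosh t - cos t := by
    rw [hB, div_mul_cancel₀ _ hne]
  calc ∫ x in (0:ℝ)..1, beamProfile B (t * x) ^ 2
      = t⁻¹ * ∫ u in (0:ℝ)..t, beamProfile B u ^ 2 := by
        rw [intervalIntegral.integral_comp_mul_left (fun u => beamProfile B u ^ 2) ht.ne',
          mul_zero, mul_one, smul_eq_mul]
    _ = 1 := by
        rw [integral_beamProfile_sq, beamProfileSqPrimitive_add_eq_self hcc hB' hne,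
          inv_mul_cancel₀ ht.ne']
end

section
/- Let t > 0 satisfy cosh(t)cos(t) = 1, B = (cosh(t)-cos(t))/(sinh(t)-sin(t)), and define α = cosh(t/2) - B·sinh(t/2), β = sinh(t/2) - B·cosh(t/2). Then α·β = 0. -/
theorem alpha_beta_zero (t : ℝ) (ht : 0 < t)
    (hcc : Real.cosh t * Real.cos t = 1)
    (B α β : ℝ) (hB : B = (Real.cosh t - Real.cos t) / (Real.sinh t - Real.sin t))
    (hα : α = Real.cosh (t / 2) - B * Real.sinh (t / 2))
    (hβ : β = Real.sinh (t / 2) - B * Real.cosh (t / 2)) :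
    α * β = 0 := by
  have hd : Real.sinh t - Real.sin t > 0 := by
    have h1 : t < Real.sinh t := Real.self_lt_sinh_iff.mpr ht
    have h2 : Real.sin t ≤ t := Real.sin_le ht.le
    linarith
  have hB' : B * (Real.sinh t - Real.sin t) = Real.cosh t - Real.cos t := by
    rw [hB]; field_simp
  have hs2 : Real.sinh t = 2 * Real.sinh (t / 2) * Real.cosh (t / 2) := by
    rw [← Real.sinh_two_mul]; ring_nf
  have hc2 : Real.cosh t = Real.cosh (t / 2) ^ 2 + Real.sinh (t / 2) ^ 2 := by
    rw [← Real.cosh_two_mul]; ring_nf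
  have hpy : Real.cosh (t / 2) ^ 2 - Real.sinh (t / 2) ^ 2 = 1 :=
    Real.cosh_sq_sub_sinh_sq (t / 2)
  have hpy2 : Real.cosh t ^ 2 - Real.sinh t ^ 2 = 1 := Real.cosh_sq_sub_sinh_sq t
  have hsc : Real.sin t ^ 2 + Real.cos t ^ 2 = 1 := Real.sin_sq_add_cos_sq t
  have hdne : Real.sinh t - Real.sin t ≠ 0 := ne_of_gt hd
  have e1 : (Real.sinh t - Real.sin t) ^ 2 + (Real.cosh t - Real.cos t) ^ 2
      = 2 * Real.sinh t * (Real.sinh t - Real.sin t) := by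
    nlinarith [hpy2, hsc, hcc]
  have e2 : B ^ 2 * (Real.sinh t - Real.sin t) ^ 2 = (Real.cosh t - Real.cos t) ^ 2 := by
    linear_combination (B * (Real.sinh t - Real.sin t) + (Real.cosh t - Real.cos t)) * hB'
  have e4 : (1 + B ^ 2) * (Real.sinh t - Real.sin t) = 2 * Real.sinh t := by
    apply mul_right_cancel₀ hdne
    linear_combination e1 + e2
  have key : (1 + B ^ 2) * Real.sinh t = 2 * B * Real.cosh t := by
    apply mul_right_cancel₀ hdne
    linear_combination Real.sinh t * e4 - 2 * Real.cosh t * hB' - 2 * hpy2 + 2 * hcc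
  rw [hs2, hc2] at key
  subst hα hβ
  linear_combination key / 2
end
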